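/- Let p, p + 2, and 2p + 1 all be prime, and let k = 2p - 1. Then the permutation σ of [k] given by σ(k) = 1, σ(k-1) = 2, σ(p) = p, σ(p-2) = p+2, and σ(i) = i + 2 otherwise, is weakly consecutive. -/
import Mathlib


/-- A permutation `σ` of `[k] = {1,…,k}` is weakly consecutive if for all
`i, j ∈ [k]` and integers `m`, whenever `m ∣ σ i` and `m ∣ (i - j)`, then `m ∣ σ j`. -/
def IsWCS (k : ℕ) (σ : ℕ → ℕ) : Prop :=
  Set.BijOn σ (Set.Icc 1 k) (Set.Icc 1 k) ∧
  ∀ (m : ℕ) (i j : ℕ), i ∈ Set.Icc 1 k → j ∈ Set.Icc 1 k →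
    m ∣ σ i → (m : ℤ) ∣ ((i : ℤ) - (j : ℤ)) → m ∣ σ j

private lemma dvd_pin' {n x : ℕ} (h : n ∣ x) (h1 : 1 ≤ x) (h2 : x < 2 * n) : x = n := by
  have hn : n ≤ x := Nat.le_of_dvd (by omega) h
  have h3 : n ∣ x - n := Nat.dvd_sub h dvd_rfl
  rcases Nat.eq_zero_or_pos (x - n) with h5 | h5
  · omega
  · have := Nat.le_of_dvd h5 h3; omega

private lemma dvd2p' {p m : ℕ} (hp : p.Prime) (h : m ∣ 2 * p) :
    m = 1 ∨ m = 2 ∨ m = p ∨ m = 2 * p := by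
  rcases hp.eq_one_or_self_of_dvd (Nat.gcd m p) (Nat.gcd_dvd_right m p) with h1 | h1
  · have h2 : m ∣ 2 := Nat.Coprime.dvd_of_dvd_mul_right h1 h
    rcases Nat.prime_two.eq_one_or_self_of_dvd m h2 with h' | h'
    · exact Or.inl h'
    · exact Or.inr (Or.inl h')
  · have hpm : p ∣ m := h1 ▸ Nat.gcd_dvd_left m p
    obtain ⟨s, rfl⟩ := hpm
    have hs : s ∣ 2 := by
      have h' : p * s ∣ p * 2 := by rwa [mul_comm 2 p] at h
      exact (Nat.mul_dvd_mul_iff_left hp.pos).mp h'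
    rcases Nat.prime_two.eq_one_or_self_of_dvd s hs with rfl | rfl
    · right; right; left; exact mul_one p
    · right; right; right; exact mul_comm p 2

theorem twin_sophie_germain_is_wcs (p k : ℕ) (hp : p.Prime) (hp2 : (p + 2).Prime)
    (hsg : (2 * p + 1).Prime) (hk : k = 2 * p - 1) :
    IsWCS k (fun i =>
      if i = k then 1 else if i = k - 1 then 2
      else if i = p then p else if i = p - 2 then p + 2 else i + 2) := by
  have hple := hp.two_le
  have hpne2 : p ≠ 2 := by rintro rfl; norm_num at hp2
  have hp3 : 3 ≤ p := by omega
  have hodd : p % 2 = 1 := by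
    by_cases h2 : 2 ∣ p
    · rcases hp.eq_one_or_self_of_dvd 2 h2 with h | h <;> omega
    · omega
  subst hk
  unfold IsWCS
  set σ : ℕ → ℕ := fun i =>
      if i = 2 * p - 1 then 1 else if i = 2 * p - 1 - 1 then 2
      else if i = p then p else if i = p - 2 then p + 2 else i + 2 with hσdef
  have v1 : σ (2 * p - 1) = 1 := by simp [hσdef]
  have v2 : σ (2 * p - 2) = 2 := by
    simp only [hσdef]; rw [if_neg (by omega), if_pos (by omega)]
  have vp : σ p = p := by
    simp only [hσdef]; rw [if_neg (by omega), if_neg (by omega)]; simp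
  have vq : σ (p - 2) = p + 2 := by
    simp only [hσdef]
    rw [if_neg (by omega), if_neg (by omega), if_neg (by omega)]; simp
  have vg : ∀ x, x ≠ 2 * p - 1 → x ≠ 2 * p - 2 → x ≠ p → x ≠ p - 2 → σ x = x + 2 := by
    intro x a b c d
    simp only [hσdef]; rw [if_neg a, if_neg (by omega), if_neg c, if_neg d]
  have hclass : ∀ x, 1 ≤ x → x ≤ 2 * p - 1 →
      (x = 2 * p - 1 ∧ σ x = 1) ∨ (x = 2 * p - 2 ∧ σ x = 2) ∨ (x = p ∧ σ x = p) ∨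
      (x = p - 2 ∧ σ x = p + 2) ∨ (x ≠ p ∧ x ≠ p - 2 ∧ x ≤ 2 * p - 3 ∧ σ x = x + 2) := by
    intro x h1 h2
    by_cases e1 : x = 2 * p - 1
    · exact Or.inl ⟨e1, by rw [e1, v1]⟩
    by_cases e2 : x = 2 * p - 2
    · exact Or.inr (Or.inl ⟨e2, by rw [e2, v2]⟩)
    by_cases e3 : x = p
    · exact Or.inr (Or.inr (Or.inl ⟨e3, by rw [e3, vp]⟩))
    by_cases e4 : x = p - 2
    · exact Or.inr (Or.inr (Or.inr (Or.inl ⟨e4, by rw [e4, vq]⟩)))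
    · exact Or.inr (Or.inr (Or.inr (Or.inr ⟨e3, e4, by omega, vg x e1 e2 e3 e4⟩)))
  constructor
  · refine ⟨?_, ?_, ?_⟩
    · -- MapsTo
      intro x hx
      simp only [Set.mem_Icc] at hx ⊢
      rcases hclass x hx.1 hx.2 with ⟨h, h'⟩ | ⟨h, h'⟩ | ⟨h, h'⟩ | ⟨h, h'⟩ | ⟨h, h', h'', h'''⟩ <;>
        omega
    · -- InjOn
      intro a ha b hb hab
      simp only [Set.mem_Icc] at ha hb
      rcases hclass a ha.1 ha.2 with ⟨h, h'⟩ | ⟨h, h'⟩ | ⟨h, h'⟩ | ⟨h, h'⟩ | ⟨h, h', h'', h'''⟩ <;>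
        rcases hclass b hb.1 hb.2 with ⟨g, g'⟩ | ⟨g, g'⟩ | ⟨g, g'⟩ | ⟨g, g'⟩ | ⟨g, g', g'', g'''⟩ <;>
        omega
    · -- SurjOn
      intro y hy
      simp only [Set.mem_Icc] at hy
      by_cases e1 : y = 1
      · exact ⟨2 * p - 1, by simp only [Set.mem_Icc]; omega, by rw [v1]; omega⟩
      by_cases e2 : y = 2
      · exact ⟨2 * p - 2, by simp only [Set.mem_Icc]; omega, by rw [v2]; omega⟩
      by_cases e3 : y = p
      · exact ⟨p, by simp only [Set.mem_Icc]; omega, by rw [vp]; omega⟩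
      by_cases e4 : y = p + 2
      · exact ⟨p - 2, by simp only [Set.mem_Icc]; omega, by rw [vq]; omega⟩
      · refine ⟨y - 2, by simp only [Set.mem_Icc]; omega, ?_⟩
        rw [vg (y - 2) (by omega) (by omega) (by omega) (by omega)]
        omega
  · -- the divisibility condition
    intro m i j hi hj hmi hmij
    simp only [Set.mem_Icc] at hi hj
    by_cases hm0 : m = 0
    · exfalso
      subst hm0
      rw [Nat.zero_dvd] at hmi
      rcases hclass i hi.1 hi.2 with ⟨h, h'⟩ | ⟨h, h'⟩ | ⟨h, h'⟩ | ⟨h, h'⟩ | ⟨h, h', h'', h'''⟩ <;>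
        omega
    by_cases hm1 : m = 1
    · subst hm1; exact one_dvd _
    by_cases hm2 : m = 2
    · subst hm2
      have h2i : 2 ∣ i := by
        rcases hclass i hi.1 hi.2 with ⟨h, h'⟩ | ⟨h, h'⟩ | ⟨h, h'⟩ | ⟨h, h'⟩ | ⟨h, h', h'', h'''⟩ <;>
          omega
      have h2j : 2 ∣ j := by omega
      rcases hclass j hj.1 hj.2 with ⟨h, h'⟩ | ⟨h, h'⟩ | ⟨h, h'⟩ | ⟨h, h'⟩ | ⟨h, h', h'', h'''⟩ <;>
        omega
    have hm3 : 3 ≤ m := by omega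
    rcases hclass i hi.1 hi.2 with ⟨hieq, hival⟩ | ⟨hieq, hival⟩ | ⟨hieq, hival⟩ | ⟨hieq, hival⟩ |
      ⟨hne1, hne2, hile, hival⟩
    · -- i = 2p-1, σ i = 1 : impossible since m ≥ 3
      exfalso
      rw [hival] at hmi
      have := Nat.le_of_dvd one_pos hmi
      omega
    · -- i = 2p-2, σ i = 2 : impossible
      exfalso
      rw [hival] at hmi
      have := Nat.le_of_dvd two_pos hmi
      omega
    · -- i = p, σ i = p, so m = p
      rw [hival] at hmi
      rcases hp.eq_one_or_self_of_dvd m hmi with hm | hm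
      · omega
      · rw [hieq] at hmij
        rw [hm] at hmij ⊢
        have hj' : (p : ℤ) ∣ (j : ℤ) := by
          have e : (j : ℤ) = (p : ℤ) - ((p : ℤ) - (j : ℤ)) := by ring
          rw [e]; exact dvd_sub dvd_rfl hmij
        have hjn : p ∣ j := by exact_mod_cast hj'
        have hjp : j = p := dvd_pin' hjn (by omega) (by omega)
        rw [hjp, vp]
    · -- i = p-2, σ i = p+2, so m = p+2
      rw [hival] at hmi
      rcases hp2.eq_one_or_self_of_dvd m hmi with hm | hm
      · omega
      · rw [hieq] at hmij
        rw [hm] at hmij ⊢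
        have h0 : ((p - 2 : ℕ) : ℤ) - (j : ℤ) = 0 := by
          refine Int.eq_zero_of_abs_lt_dvd hmij ?_
          rw [abs_lt]
          constructor <;> omega
        have hjq : j = p - 2 := by omega
        rw [hjq, vq]
    · -- generic i : m ∣ i + 2
      rw [hival] at hmi
      have hmi2 : (m : ℤ) ∣ (i : ℤ) + 2 := by exact_mod_cast hmi
      rcases hclass j hj.1 hj.2 with ⟨hjeq, hjval⟩ | ⟨hjeq, hjval⟩ | ⟨hjeq, hjval⟩ | ⟨hjeq, hjval⟩ |
        ⟨gne1, gne2, gjle, hjval⟩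
      · -- j = 2p-1 : derive m ∣ 2p+1, contradiction
        exfalso
        rw [hjeq] at hmij
        have hd : m ∣ 2 * p + 1 := by
          have h' : (m : ℤ) ∣ ((i : ℤ) + 2) - ((i : ℤ) - ((2 * p - 1 : ℕ) : ℤ)) :=
            dvd_sub hmi2 hmij
          have e : ((i : ℤ) + 2) - ((i : ℤ) - ((2 * p - 1 : ℕ) : ℤ)) = ((2 * p + 1 : ℕ) : ℤ) := by
            omega
          rw [e] at h'
          exact_mod_cast h'
        rcases hsg.eq_one_or_self_of_dvd m hd with hm | hm
        · omega
        · have := Nat.le_of_dvd (by omega) hmi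
          omega
      · -- j = 2p-2 : derive m ∣ 2p, contradiction
        exfalso
        rw [hjeq] at hmij
        have hd : m ∣ 2 * p := by
          have h' : (m : ℤ) ∣ ((i : ℤ) + 2) - ((i : ℤ) - ((2 * p - 2 : ℕ) : ℤ)) :=
            dvd_sub hmi2 hmij
          have e : ((i : ℤ) + 2) - ((i : ℤ) - ((2 * p - 2 : ℕ) : ℤ)) = ((2 * p : ℕ) : ℤ) := by
            omega
          rw [e] at h'
          exact_mod_cast h'
        rcases dvd2p' hp hd with hm | hm | hm | hm
        · omega
        · omega
        · rw [hm] at hmi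
          have := dvd_pin' hmi (by omega) (by omega)
          omega
        · have := Nat.le_of_dvd (by omega) hmi
          omega
      · -- j = p : derive m ∣ p+2, so m = p+2, then i = p, contradiction
        exfalso
        rw [hjeq] at hmij
        have hd : m ∣ p + 2 := by
          have h' : (m : ℤ) ∣ ((i : ℤ) + 2) - ((i : ℤ) - ((p : ℕ) : ℤ)) := dvd_sub hmi2 hmij
          have e : ((i : ℤ) + 2) - ((i : ℤ) - ((p : ℕ) : ℤ)) = ((p + 2 : ℕ) : ℤ) := by omega
          rw [e] at h'
          exact_mod_cast h'
        rcases hp2.eq_one_or_self_of_dvd m hd with hm | hm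
        · omega
        · rw [hm] at hmi
          have := dvd_pin' hmi (by omega) (by omega)
          omega
      · -- j = p-2 : derive m ∣ p, so m = p, then i = p-2, contradiction
        exfalso
        rw [hjeq] at hmij
        have hd : m ∣ p := by
          have h' : (m : ℤ) ∣ ((i : ℤ) + 2) - ((i : ℤ) - ((p - 2 : ℕ) : ℤ)) := dvd_sub hmi2 hmij
          have e : ((i : ℤ) + 2) - ((i : ℤ) - ((p - 2 : ℕ) : ℤ)) = ((p : ℕ) : ℤ) := by omega
          rw [e] at h'
          exact_mod_cast h'
        rcases hp.eq_one_or_self_of_dvd m hd with hm | hm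
        · omega
        · rw [hm] at hmi
          have := dvd_pin' hmi (by omega) (by omega)
          omega
      · -- generic j
        rw [hjval]
        have h' : (m : ℤ) ∣ (j : ℤ) + 2 := by
          have h'' : (m : ℤ) ∣ ((i : ℤ) + 2) - ((i : ℤ) - (j : ℤ)) := dvd_sub hmi2 hmij
          have e : ((i : ℤ) + 2) - ((i : ℤ) - (j : ℤ)) = (j : ℤ) + 2 := by ring
          rwa [e] at h''
        exact_mod_cast h'
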